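/- arXiv:2404.13117 — 2 statements merged into one kernel-verified Lean document; each statement's English description precedes it below -/
import Mathlib

section
/- For all β, γ > 0: ∫ e^{−βx} ν*(dx) = (γ/β) e^{−Ψ(γ/β)}. In particular, with ς = 1/γ the mean of an exponential jump of rate γ and w(x) = e^{−βx}, the asymptotic flock speed ς ∫ w(x) ν*(dx) equals β⁻¹ e^{−Ψ(γ/β)}. -/
/-!
Under `t = e^{-β(x - m)}` with `m = β⁻¹ Ψ(γ/β)`, the density `e^{-βx} dν*` becomes
`e^{-βm} γ / (β Γ(1 + γ/β))` times the Gamma integrand `e^{-t} t^{γ/β} dt`. Its integral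
`Γ(1 + γ/β)` cancels the normalisation, leaving `(γ/β) e^{-βm} = (γ/β) e^{-Ψ(γ/β)}`.
-/

open MeasureTheory Real Set

section WithDensityOfReal

variable {α E : Type*} [MeasurableSpace α] [NormedAddCommGroup E] [NormedSpace ℝ E]
  {μ : Measure α} {d : α → ℝ}

theorem integrable_withDensity_ofReal_iff (hd : Measurable d) (hd_nonneg : ∀ x, 0 ≤ d x)
    {g : α → E} :
    Integrable g (μ.withDensity fun x => ENNReal.ofReal (d x)) ↔
      Integrable (fun x => d x • g x) μ := by
  simp only [integrable_withDensity_iff_integrable_smul' hd.ennreal_ofReal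
    (.of_forall fun _ => ENNReal.ofReal_lt_top), ENNReal.toReal_ofReal (hd_nonneg _)]

theorem integral_withDensity_ofReal (hd : Measurable d) (hd_nonneg : ∀ x, 0 ≤ d x) (g : α → E) :
    ∫ x, g x ∂μ.withDensity (fun x => ENNReal.ofReal (d x)) = ∫ x, d x • g x ∂μ := by
  simp only [integral_withDensity_eq_integral_toReal_smul hd.ennreal_ofReal
    (.of_forall fun _ => ENNReal.ofReal_lt_top), ENNReal.toReal_ofReal (hd_nonneg _)]

end WithDensityOfReal

section ExpSubstitution

variable {E : Type*} [NormedAddCommGroup E] [NormedSpace ℝ E]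

theorem integral_exp_smul_comp_exp (g : ℝ → E) :
    ∫ y, exp y • g (exp y) = ∫ t in Ioi 0, g t := by
  symm
  rw [← range_exp, ← image_univ]
  simpa [abs_of_pos (exp_pos _)] using integral_image_eq_integral_abs_deriv_smul
    MeasurableSet.univ (fun x _ => (hasDerivAt_exp x).hasDerivWithinAt) exp_injective.injOn g

theorem integrable_exp_smul_comp_exp_iff (g : ℝ → E) :
    Integrable (fun y => exp y • g (exp y)) ↔ IntegrableOn g (Ioi 0) := by
  symm
  rw [← range_exp, ← image_univ]
  simpa [abs_of_pos (exp_pos _)] using integrableOn_image_iff_integrableOn_abs_deriv_smul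
    MeasurableSet.univ (fun x _ => (hasDerivAt_exp x).hasDerivWithinAt) exp_injective.injOn g

end ExpSubstitution

theorem exp_smul_gammaIntegrand_exp (a y : ℝ) :
    exp y • (exp (-exp y) * exp y ^ (a - 1)) = exp (a * y - exp y) := by
  rw [← exp_mul, smul_eq_mul, ← exp_add, ← exp_add]
  ring_nf

theorem integrable_exp_mul_sub_exp {a : ℝ} (ha : 0 < a) :
    Integrable fun y => exp (a * y - exp y) := by
  simpa only [exp_smul_gammaIntegrand_exp] using
    (integrable_exp_smul_comp_exp_iff _).2 (GammaIntegral_convergent ha)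

theorem integral_exp_mul_sub_exp {a : ℝ} (ha : 0 < a) :
    ∫ y, exp (a * y - exp y) = Gamma a := by
  simpa only [exp_smul_gammaIntegrand_exp, ← Gamma_eq_integral ha] using
    integral_exp_smul_comp_exp fun t => exp (-t) * t ^ (a - 1)

theorem exp_neg_mul_sub_exp_neg_mul_eq {β : ℝ} (hβ : β ≠ 0) (c m x : ℝ) :
    exp (-c * (x - m) - exp (-β * (x - m))) =
      exp (c / β * (-β * x - -β * m) - exp (-β * x - -β * m)) := by
  simp only [← mul_sub]
  field_simp

theorem integrable_exp_neg_mul_sub_exp_neg_mul {c β : ℝ} (h : 0 < c / β) (m : ℝ) :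
    Integrable fun x => exp (-c * (x - m) - exp (-β * (x - m))) := by
  have hβ : β ≠ 0 := by rintro rfl; simp at h
  simp only [exp_neg_mul_sub_exp_neg_mul_eq hβ]
  exact ((integrable_exp_mul_sub_exp h).comp_sub_right _).comp_mul_left' (neg_ne_zero.2 hβ)

theorem integral_exp_neg_mul_sub_exp_neg_mul {c β : ℝ} (h : 0 < c / β) (m : ℝ) :
    ∫ x, exp (-c * (x - m) - exp (-β * (x - m))) = Gamma (c / β) / |β| := by
  have hβ : β ≠ 0 := by rintro rfl; simp at h
  simp only [exp_neg_mul_sub_exp_neg_mul_eq hβ]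
  rw [Measure.integral_comp_mul_left (fun y => exp (c / β * (y - -β * m) - exp (y - -β * m))),
    integral_sub_right_eq_self (fun y => exp (c / β * y - exp y)), integral_exp_mul_sub_exp h,
    abs_inv, abs_neg, smul_eq_mul, inv_mul_eq_div]

theorem nustar_speed_general
    (β γ : ℝ) (hβ : 0 < β) (hγ : 0 < γ)
    (Ψ : ℝ → ℝ)
    (ν : Measure ℝ)
    (hν : ν = volume.withDensity (fun x => ENNReal.ofReal
      ((γ / Real.Gamma (1 + γ / β)) * Real.exp
        (-γ * (x - β⁻¹ * Ψ (γ / β)) - Real.exp (-β * (x - β⁻¹ * Ψ (γ / β))))))) :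
    Integrable (fun x => Real.exp (-β * x)) ν ∧
    (∫ x, Real.exp (-β * x) ∂ν) = (γ / β) * Real.exp (-Ψ (γ / β)) ∧
    (1 / γ) * (∫ x, Real.exp (-β * x) ∂ν) = β⁻¹ * Real.exp (-Ψ (γ / β)) := by
  set m := β⁻¹ * Ψ (γ / β)
  set C := γ / Gamma (1 + γ / β)
  have hd : Measurable fun x => C * exp (-γ * (x - m) - exp (-β * (x - m))) := by fun_prop
  have hd_nonneg : ∀ x, 0 ≤ C * exp (-γ * (x - m) - exp (-β * (x - m))) := fun x => by positivity
  have hshape : ∀ x, (C * exp (-γ * (x - m) - exp (-β * (x - m)))) • exp (-β * x) =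
      C * exp (-β * m) * exp (-(γ + β) * (x - m) - exp (-β * (x - m))) := fun x => by
    rw [smul_eq_mul, mul_assoc, mul_assoc, ← exp_add, ← exp_add]
    ring_nf
  have hβm : β * m = Ψ (γ / β) := mul_inv_cancel_left₀ hβ.ne' _
  have hexp : 0 < (γ + β) / β := by positivity
  have hint : Integrable (fun x => exp (-β * x)) ν := by
    rw [hν, integrable_withDensity_ofReal_iff hd hd_nonneg]
    simpa only [hshape] using (integrable_exp_neg_mul_sub_exp_neg_mul hexp m).const_mul _
  have hval : ∫ x, exp (-β * x) ∂ν = γ / β * exp (-Ψ (γ / β)) := by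
    rw [hν, integral_withDensity_ofReal hd hd_nonneg]
    simp only [hshape]
    rw [integral_const_mul, integral_exp_neg_mul_sub_exp_neg_mul hexp, abs_of_pos hβ,
      add_div, div_self hβ.ne', add_comm (γ / β), neg_mul, hβm]
    have hC : C * Gamma (1 + γ / β) = γ :=
      div_mul_cancel₀ _ (Gamma_pos_of_pos (by positivity)).ne'
    linear_combination exp (-Ψ (γ / β)) / β * hC
  refine ⟨hint, hval, ?_⟩
  rw [hval]
  field_simp

/-- `∫ e^{-βx} ν*(dx) = (γ/β) e^{-Ψ(γ/β)}`; in particular, with `ς = 1/γ`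
and `w(x) = e^{-βx}`, the asymptotic flock speed `ς ∫ w dν*` equals `β⁻¹ e^{-Ψ(γ/β)}`. -/
theorem nustar_speed
    (β γ : ℝ) (hβ : 0 < β) (hγ : 0 < γ)
    (Ψ : ℝ → ℝ) (hΨ : ∀ a, Ψ a = deriv Real.Gamma a / Real.Gamma a)
    (ν : Measure ℝ)
    (hν : ν = volume.withDensity (fun x => ENNReal.ofReal
      ((γ / Real.Gamma (1 + γ / β)) * Real.exp
        (-γ * (x - β⁻¹ * Ψ (γ / β)) - Real.exp (-β * (x - β⁻¹ * Ψ (γ / β))))))) :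
    Integrable (fun x => Real.exp (-β * x)) ν ∧
    (∫ x, Real.exp (-β * x) ∂ν) = (γ / β) * Real.exp (-Ψ (γ / β)) ∧
    (1 / γ) * (∫ x, Real.exp (-β * x) ∂ν) = β⁻¹ * Real.exp (-Ψ (γ / β)) :=
  nustar_speed_general β γ hβ hγ Ψ ν hν
end

section
/- For t ≥ 0 let ν*(t) be the Borel probability measure on ℝ whose cumulative distribution function is F*(t,·). Then for every x ∈ ℝ and every t > 0 at which Θ is differentiable with Θ'(t) = θ(t), the partial derivative ∂F*/∂t(t,x) exists and satisfies ∂F*/∂t(t,x) = −e^{−γx} ∫_{(−∞,x]} e^{(γ−β)y} ν*(t,dy) + γ⁻¹ θ(t) · ∂F*/∂x(t,x). -/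
/-!
With `Φ(w) = C ∫_{-∞}^w e^{-γy - e^{-βy}} dy` and `L t = ζ 0 t`, the profile is a travelling
wave, `F*(t,x) = Φ(x + L t)`, so `ν*(t)` has density `Φ'(· + L t)` and `∂ₜF* = L' ∂ₓF*`.
The shift solves `L' = γ⁻¹θ - β⁻¹ e^{βL}`, and the Gumbel primitive
`∫_{-∞}^z e^{-βu - e^{-βu}} du = β⁻¹ e^{-e^{-βz}}` identifies the nonlocal term:
`e^{-γx} ∫_{(-∞,x]} e^{(γ-β)y} ν*(t,dy) = β⁻¹ e^{βL} ∂ₓF*(t,x)`.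
-/

open MeasureTheory Filter Set Topology Real

noncomputable def gumbelKernel (β γ y : ℝ) : ℝ := exp (-γ * y - exp (-β * y))

theorem gumbelKernel_pos (β γ y : ℝ) : 0 < gumbelKernel β γ y := exp_pos _

@[fun_prop]
theorem continuous_gumbelKernel (β γ : ℝ) : Continuous (gumbelKernel β γ) := by
  unfold gumbelKernel
  fun_prop

theorem integrable_gumbelKernel {β γ : ℝ} (hβ : 0 < β) (hγ : 0 < γ) :
    Integrable (gumbelKernel β γ) := by
  refine (continuous_gumbelKernel β γ).locallyIntegrable.integrable_of_isBigO_atBot_atTop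
    (g := fun y => exp y) (g' := fun y => exp (-γ * y)) ?_
    ⟨Iic 0, Iic_mem_atBot 0, integrableOn_exp_Iic 0⟩ ?_
    ⟨Ioi 0, Ioi_mem_atTop 0, exp_neg_integrableOn_Ioi 0 hγ⟩
  · -- on `y ≤ 0`, with `u = -β y ≥ 0` and `m = (γ + 1) / β`: `m u - eᵘ ≤ m u - u² / 2 ≤ m² / 2`
    refine isBigO_exp_comp_exp_comp.2
      (isBoundedUnder_of_eventually_le (a := ((γ + 1) / β) ^ 2 / 2) ?_)
    filter_upwards [eventually_le_atBot 0] with y hy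
    have hquad := quadratic_le_exp_of_nonneg (x := -β * y) (by nlinarith)
    have hlin : (-γ - 1) * y = (γ + 1) / β * (-β * y) := by field_simp; ring
    simp only [Pi.sub_apply]
    nlinarith [sq_nonneg (-β * y - (γ + 1) / β)]
  · refine isBigO_exp_comp_exp_comp.2 (isBoundedUnder_of_eventually_le (a := 0) ?_)
    filter_upwards with y
    simp only [Pi.sub_apply]
    linarith [exp_pos (-β * y)]

theorem integral_Iic_gumbelKernel_self {β : ℝ} (hβ : 0 < β) (z : ℝ) :
    ∫ y in Iic z, gumbelKernel β β y = β⁻¹ * exp (-exp (-β * z)) := by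
  have hderiv : ∀ y ∈ Iic z, HasDerivAt (fun w => β⁻¹ * exp (-exp (-β * w)))
      (gumbelKernel β β y) y := by
    intro y _
    have h := ((((hasDerivAt_id y).const_mul (-β)).exp.neg.exp).const_mul β⁻¹)
    refine h.congr_deriv ?_
    simp only [gumbelKernel, id, mul_one, Pi.neg_apply]
    rw [sub_eq_add_neg, exp_add]
    field_simp
  have hlim : Tendsto (fun w => β⁻¹ * exp (-exp (-β * w))) atBot (𝓝 0) := by
    have h : Tendsto (fun w => -exp (-β * w)) atBot atBot :=
      tendsto_neg_atTop_atBot.comp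
        (tendsto_exp_atTop.comp (tendsto_id.const_mul_atBot_of_neg (neg_lt_zero.2 hβ)))
    simpa using (tendsto_exp_atBot.comp h).const_mul β⁻¹
  rw [integral_Iic_of_hasDerivAt_of_tendsto' hderiv
    (integrable_gumbelKernel hβ hβ).integrableOn hlim, sub_zero]

theorem setIntegral_Iic_comp_add_right {E : Type*} [NormedAddCommGroup E] [NormedSpace ℝ E]
    (f : ℝ → E) (c z : ℝ) : ∫ y in Iic z, f (y + c) = ∫ y in Iic (z + c), f y := by
  have hpre : (· + c) ⁻¹' Iic (z + c) = Iic z := by ext; simp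
  rw [← (measurePreserving_add_right volume c).setIntegral_preimage_emb
    (measurableEmbedding_addRight c) f (Iic (z + c)), hpre]

/-- Multiplying by `e^{(γ-β)y}` turns the kernel into the `γ = β` one, which has an explicit
primitive. -/
theorem exp_mul_integral_Iic_mul_gumbelKernel {β : ℝ} (hβ : 0 < β) (γ c x : ℝ) :
    exp (-γ * x) * ∫ y in Iic x, gumbelKernel β γ (y + c) * exp ((γ - β) * y)
      = β⁻¹ * exp (β * c) * gumbelKernel β γ (x + c) := by
  have hpt : ∀ y, gumbelKernel β γ (y + c) * exp ((γ - β) * y)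
      = exp ((β - γ) * c) * gumbelKernel β β (y + c) := by
    intro y
    simp only [gumbelKernel, ← exp_add]
    ring_nf
  simp_rw [hpt]
  have hexp : exp (-γ * x) * exp ((β - γ) * c) * exp (-exp (-β * (x + c)))
      = exp (β * c) * gumbelKernel β γ (x + c) := by
    simp only [gumbelKernel, ← exp_add]
    ring_nf
  rw [integral_const_mul, setIntegral_Iic_comp_add_right (gumbelKernel β β),
    integral_Iic_gumbelKernel_self hβ]
  linear_combination β⁻¹ * hexp

theorem hasDerivAt_integral_Iic {E : Type*} [NormedAddCommGroup E] [NormedSpace ℝ E]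
    [CompleteSpace E] {f : ℝ → E} (hf : Continuous f) (hint : ∀ z, IntegrableOn f (Iic z))
    (z : ℝ) : HasDerivAt (fun w => ∫ y in Iic w, f y) (f z) z := by
  have hsplit : (fun w => ∫ y in Iic w, f y)
      = fun w => (∫ y in Iic 0, f y) + ∫ y in (0 : ℝ)..w, f y := by
    ext w
    rw [← intervalIntegral.integral_Iic_sub_Iic (hint 0) (hint w), add_sub_cancel]
  rw [hsplit]
  exact (hf.integral_hasStrictDerivAt 0 z).hasDerivAt.const_add _

theorem hasDerivAt_intervalIntegral_of_continuousOn {E : Type*} [NormedAddCommGroup E]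
    [NormedSpace ℝ E] [CompleteSpace E] {f : ℝ → E} {a b t : ℝ} (hf : ContinuousOn f (Icc a b))
    (ht : t ∈ Ioo a b) : HasDerivAt (fun τ => ∫ s in a..τ, f s) (f t) t := by
  have hf' : ContinuousOn f (Ioo a b) := hf.mono Ioo_subset_Icc_self
  have hsub : uIcc a t ⊆ Icc a b :=
    uIcc_subset_Icc (left_mem_Icc.2 (ht.1.trans ht.2).le) ⟨ht.1.le, ht.2.le⟩
  exact intervalIntegral.integral_hasDerivAt_right (hf.mono hsub).intervalIntegrable
    (hf'.stronglyMeasurableAtFilter isOpen_Ioo t ht) (hf'.continuousAt (isOpen_Ioo.mem_nhds ht))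

theorem eq_withDensity_ofReal_of_toReal_Iic {ν : Measure ℝ} [IsFiniteMeasure ν] {f : ℝ → ℝ}
    (hf_nonneg : ∀ y, 0 ≤ f y) (hf_int : ∀ z, IntegrableOn f (Iic z))
    (hcdf : ∀ z, (ν (Iic z)).toReal = ∫ y in Iic z, f y) :
    ν = volume.withDensity fun y => ENNReal.ofReal (f y) := by
  refine Measure.ext_of_Iic _ _ fun z => ?_
  rw [withDensity_apply _ measurableSet_Iic, ← ofReal_integral_eq_lintegral_ofReal (hf_int z)
    (ae_of_all _ hf_nonneg), ← hcdf, ENNReal.ofReal_toReal (measure_ne_top _ _)]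

theorem setIntegral_withDensity_ofReal {X : Type*} [MeasurableSpace X] {μ : Measure X}
    {f : X → ℝ} (hf : Measurable f) (hf_nonneg : ∀ y, 0 ≤ f y) (φ : X → ℝ) {s : Set X}
    (hs : MeasurableSet s) :
    ∫ y in s, φ y ∂μ.withDensity (fun y => ENNReal.ofReal (f y))
      = ∫ y in s, f y * φ y ∂μ := by
  rw [setIntegral_withDensity_eq_setIntegral_toReal_smul hf.ennreal_ofReal
    (ae_of_all _ fun _ => ENNReal.ofReal_lt_top) φ hs]
  simp only [ENNReal.toReal_ofReal (hf_nonneg _), smul_eq_mul]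

theorem exp_mul_integral_Iic_of_toReal_Iic {β γ C c : ℝ} (hβ : 0 < β) (hγ : 0 < γ) (hC : 0 ≤ C)
    {ν : Measure ℝ} [IsFiniteMeasure ν]
    (hcdf : ∀ z, (ν (Iic z)).toReal = C * ∫ u in Iic (z + c), gumbelKernel β γ u) (x : ℝ) :
    exp (-γ * x) * ∫ y in Iic x, exp ((γ - β) * y) ∂ν
      = C * (β⁻¹ * exp (β * c) * gumbelKernel β γ (x + c)) := by
  have hdens_nonneg : ∀ y, 0 ≤ C * gumbelKernel β γ (y + c) :=
    fun y => mul_nonneg hC (gumbelKernel_pos ..).le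
  have hν : ν = volume.withDensity fun y => ENNReal.ofReal (C * gumbelKernel β γ (y + c)) := by
    refine eq_withDensity_ofReal_of_toReal_Iic hdens_nonneg
      (fun _ => (((integrable_gumbelKernel hβ hγ).comp_add_right c).const_mul C).integrableOn)
      fun z => ?_
    rw [hcdf, integral_const_mul, setIntegral_Iic_comp_add_right]
  rw [hν, setIntegral_withDensity_ofReal (by fun_prop) hdens_nonneg _ measurableSet_Iic,
    ← exp_mul_integral_Iic_mul_gumbelKernel hβ γ c x]
  simp_rw [mul_assoc C, integral_const_mul]
  ring

/-- `ζ x t = x + gumbelShift β γ Θ t`. -/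
noncomputable def gumbelShift (β γ : ℝ) (Θ : ℝ → ℝ) (τ : ℝ) : ℝ :=
  γ⁻¹ * Θ τ - β⁻¹ * log (1 + ∫ s in (0 : ℝ)..τ, exp (β * γ⁻¹ * Θ s))

theorem hasDerivAt_gumbelShift {β γ θ₀ T t : ℝ} {Θ : ℝ → ℝ} (hβ : β ≠ 0)
    (hΘ : ContinuousOn Θ (Icc 0 T)) (ht : t ∈ Ioo 0 T) (hΘt : HasDerivAt Θ θ₀ t) :
    HasDerivAt (gumbelShift β γ Θ) (γ⁻¹ * θ₀ - β⁻¹ * exp (β * gumbelShift β γ Θ t)) t := by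
  set I := ∫ s in (0 : ℝ)..t, exp (β * γ⁻¹ * Θ s)
  have hI : HasDerivAt (fun τ => ∫ s in (0 : ℝ)..τ, exp (β * γ⁻¹ * Θ s))
      (exp (β * γ⁻¹ * Θ t)) t :=
    hasDerivAt_intervalIntegral_of_continuousOn (by fun_prop) ht
  have hI_pos : 0 < 1 + I := by
    have : 0 ≤ I := intervalIntegral.integral_nonneg ht.1.le fun s _ => (exp_pos _).le
    linarith
  have hexp : exp (β * gumbelShift β γ Θ t) = exp (β * γ⁻¹ * Θ t) / (1 + I) := by
    rw [gumbelShift, mul_sub, ← mul_assoc, ← mul_assoc, mul_inv_cancel₀ hβ, one_mul, exp_sub,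
      exp_log hI_pos]
  rw [hexp]
  exact (hΘt.const_mul γ⁻¹).sub (((hI.const_add 1).log hI_pos.ne').const_mul β⁻¹)

theorem Fstar_pde_general
    (β γ : ℝ) (hβ : 0 < β) (hβγ : β ≤ γ)
    (θ : ℝ → ℝ)
    (hθloc : ∀ t : ℝ, IntegrableOn θ (Set.Icc 0 t))
    (Θ : ℝ → ℝ) (hΘ : ∀ t, Θ t = ∫ s in (0:ℝ)..t, θ s)
    (ζ : ℝ → ℝ → ℝ)
    (hζ : ∀ x t, ζ x t = x + γ⁻¹ * Θ t
      - β⁻¹ * Real.log (1 + ∫ s in (0:ℝ)..t, Real.exp (β * γ⁻¹ * Θ s)))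
    (F : ℝ → ℝ → ℝ)
    (hF : ∀ t x, F t x = (γ / Real.Gamma (1 + γ / β))
      * ∫ y in Set.Iic (ζ x t), Real.exp (-γ * y - Real.exp (-β * y)))
    (ν : ℝ → Measure ℝ)
    (hνprob : ∀ t, IsProbabilityMeasure (ν t))
    (hνcdf : ∀ t x, (ν t (Set.Iic x)).toReal = F t x)
    (x t : ℝ) (ht : 0 < t) (hΘdiff : HasDerivAt Θ (θ t) t) :
    HasDerivAt (fun τ => F τ x)
      (-Real.exp (-γ * x) * (∫ y in Set.Iic x, Real.exp ((γ - β) * y) ∂(ν t))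
        + γ⁻¹ * θ t * deriv (fun x' => F t x') x) t := by
  have hγ : 0 < γ := hβ.trans_le hβγ
  set C := γ / Gamma (1 + γ / β)
  have hC : 0 ≤ C := (div_pos hγ (Gamma_pos_of_pos (by positivity))).le
  set L := gumbelShift β γ Θ
  set c := L t
  have hFL : ∀ τ y, F τ y = C * ∫ u in Iic (y + L τ), gumbelKernel β γ u := by
    intro τ y
    rw [hF, hζ, add_sub_assoc]
    rfl
  have hG : ∀ w,
      HasDerivAt (fun w => ∫ u in Iic w, gumbelKernel β γ u) (gumbelKernel β γ w) w :=
    hasDerivAt_integral_Iic (continuous_gumbelKernel β γ) fun _ =>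
      (integrable_gumbelKernel hβ hγ).integrableOn
  have hL : HasDerivAt L (γ⁻¹ * θ t - β⁻¹ * exp (β * c)) t := by
    have hΘcont : ContinuousOn Θ (Icc 0 (t + 1)) := by
      have h_uIcc : uIcc 0 (t + 1) = Icc 0 (t + 1) := uIcc_of_le (by linarith)
      rw [funext hΘ, ← h_uIcc]
      exact intervalIntegral.continuousOn_primitive_interval (h_uIcc ▸ hθloc (t + 1))
    exact hasDerivAt_gumbelShift hβ.ne' hΘcont ⟨ht, lt_add_one t⟩ hΘdiff
  have hFt : HasDerivAt (fun τ => F τ x)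
      (C * (gumbelKernel β γ (x + c) * (γ⁻¹ * θ t - β⁻¹ * exp (β * c)))) t := by
    rw [funext fun τ => hFL τ x]
    exact ((hG (x + c)).comp t (hL.const_add x)).const_mul C
  have hFx : deriv (fun y => F t y) x = C * gumbelKernel β γ (x + c) := by
    rw [funext (hFL t)]
    exact (((hG (x + c)).comp_add_const x c).const_mul C).deriv
  have hweighted := exp_mul_integral_Iic_of_toReal_Iic hβ hγ hC (ν := ν t)
    (fun z => by rw [hνcdf, hFL]) x
  rw [hFx]
  convert hFt using 1
  linear_combination -hweighted

/-- at every `t > 0` where `Θ` is differentiable with `Θ'(t) = θ(t)`, the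
time partial derivative of `F*` exists and satisfies the PDE
`∂F*/∂t(t,x) = -e^{-γx} ∫_{(-∞,x]} e^{(γ-β)y} ν*(t,dy) + γ⁻¹ θ(t) ∂F*/∂x(t,x)`,
where `ν*(t)` is the probability measure with cdf `F*(t,·)`. -/
theorem Fstar_pde
    (β γ : ℝ) (hβ : 0 < β) (hβγ : β ≤ γ)
    (θ : ℝ → ℝ) (hθmeas : Measurable θ) (hθnonneg : ∀ s, 0 ≤ θ s)
    (hθloc : ∀ t : ℝ, IntegrableOn θ (Set.Icc 0 t))
    (Θ : ℝ → ℝ) (hΘ : ∀ t, Θ t = ∫ s in (0:ℝ)..t, θ s)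
    (ζ : ℝ → ℝ → ℝ)
    (hζ : ∀ x t, ζ x t = x + γ⁻¹ * Θ t
      - β⁻¹ * Real.log (1 + ∫ s in (0:ℝ)..t, Real.exp (β * γ⁻¹ * Θ s)))
    (F : ℝ → ℝ → ℝ)
    (hF : ∀ t x, F t x = (γ / Real.Gamma (1 + γ / β))
      * ∫ y in Set.Iic (ζ x t), Real.exp (-γ * y - Real.exp (-β * y)))
    (ν : ℝ → Measure ℝ)
    (hνprob : ∀ t, IsProbabilityMeasure (ν t))
    (hνcdf : ∀ t x, (ν t (Set.Iic x)).toReal = F t x)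
    (x t : ℝ) (ht : 0 < t) (hΘdiff : HasDerivAt Θ (θ t) t) :
    HasDerivAt (fun τ => F τ x)
      (-Real.exp (-γ * x) * (∫ y in Set.Iic x, Real.exp ((γ - β) * y) ∂(ν t))
        + γ⁻¹ * θ t * deriv (fun x' => F t x') x) t :=
  Fstar_pde_general β γ hβ hβγ θ hθloc Θ hΘ ζ hζ F hF ν hνprob hνcdf x t ht hΘdiff
end
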